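/- For every real η with |η| < π, the root z₁(η) = ((2 − e^{iη}) + √((2 − e^{iη})² − 4))/2 of the quadratic z² − (2 − e^{iη})z + 1 = 0, chosen continuously in η with z₁(0) = e^{iπ/3}, has strictly positive imaginary part: Im z₁(η) > 0. -/

import Mathlib

open Real

/-- The classical dilogarithm `li₂(z) = -∫₀^z log(1-t)/t dt`, parametrized along the segment. -/
noncomputable def li2 (z : ℂ) : ℂ :=
  -∫ s in (0:ℝ)..1, Complex.log (1 - z * (s:ℂ)) / (s:ℂ)

/-- The Lobachevsky function `Λ(θ) = -∫₀^θ log |2 sin t| dt`. -/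
noncomputable def lobachevsky (θ : ℝ) : ℝ :=
  -∫ t in (0:ℝ)..θ, Real.log |2 * Real.sin t|

/-- The potential function `f₁(α; η) = li₂(-e^{-2iα}) - α² + ηα + π²/12`. -/
noncomputable def f₁ (η : ℝ) (α : ℂ) : ℂ :=
  li2 (-Complex.exp (-2*Complex.I*α)) - α^2 + (η:ℂ)*α + (π:ℂ)^2/12

/-- The potential function `f₂(α; η) = li₂(-e^{-2iα}) - α² - ηα + π²/12`. -/
noncomputable def f₂ (η : ℝ) (α : ℂ) : ℂ :=
  li2 (-Complex.exp (-2*Complex.I*α)) - α^2 - (η:ℂ)*α + (π:ℂ)^2/12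

/-- The Bloch–Wigner dilogarithm `D(z) = Im li₂(z) + Arg(1-z)·ln|z|`. -/
noncomputable def blochWigner (z : ℂ) : ℝ :=
  (li2 z).im + (1 - z).arg * Real.log ‖z‖

/-! A continuous root cannot cross the real axis: a real root `x` of `z² - w z + 1 = 0` has
`x ≠ 0` (the product of the roots is `1`), so the imaginary part of the equation, `Im w · x = 0`,
forces `Im w = -sin η = 0`, i.e. `η = 0`, where the root `e^{iπ/3}` is not real. By the
intermediate value theorem `Im z` keeps the sign it has at `η = 0`. -/

theorem IsPreconnected.forall_lt_of_ne {X α : Type*} [TopologicalSpace X] [LinearOrder α]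
    [TopologicalSpace α] [OrderClosedTopology α] {s : Set X} (hs : IsPreconnected s)
    {f : X → α} (hf : ContinuousOn f s) {c : α} {a : X} (ha : a ∈ s) (hfa : c < f a)
    (hne : ∀ x ∈ s, f x ≠ c) : ∀ x ∈ s, c < f x := by
  intro x hx
  by_contra! hfx
  obtain ⟨y, hy, hfy⟩ := hs.intermediate_value hx ha hf ⟨hfx, hfa.le⟩
  exact hne y hy hfy

theorem Complex.im_ne_zero_of_sq_sub_mul_add_one_eq_zero {w z : ℂ} (hw : w.im ≠ 0)
    (hz : z ^ 2 - w * z + 1 = 0) : z.im ≠ 0 := by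
  intro him
  have hz_real : z = (z.re : ℂ) := Complex.ext rfl (by simp [him])
  have hre : z.re ≠ 0 := by
    intro hre
    rw [hz_real, hre] at hz
    simp at hz
  have hz_im := congrArg Complex.im hz
  rw [hz_real] at hz_im
  simp only [← Complex.ofReal_pow, Complex.sub_im, Complex.add_im, Complex.ofReal_im,
    Complex.mul_im, Complex.ofReal_re, Complex.one_im, Complex.zero_im] at hz_im
  exact mul_ne_zero hw hre (by linarith)

/-- For `|η| < π`, the root of `z² - (2 - e^{iη})z + 1 = 0` chosen continuously in `η`
with value `e^{iπ/3}` at `η = 0` has strictly positive imaginary part. -/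
theorem root_has_positive_imaginary_part (z : ℝ → ℂ)
    (hcont : ContinuousOn z (Set.Ioo (-π) π))
    (h0 : z 0 = Complex.exp ((π:ℂ)*Complex.I/3))
    (hroot : ∀ η ∈ Set.Ioo (-π) π,
      (z η)^2 - (2 - Complex.exp (Complex.I*(η:ℂ)))*(z η) + 1 = 0) :
    ∀ η ∈ Set.Ioo (-π) π, 0 < (z η).im := by
  have hmem0 : (0:ℝ) ∈ Set.Ioo (-π) π := ⟨neg_lt_zero.mpr pi_pos, pi_pos⟩
  have him0 : 0 < (z 0).im := by
    have : (π:ℂ) * Complex.I / 3 = ((π / 3 : ℝ) : ℂ) * Complex.I := by push_cast; ring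
    rw [h0, this, Complex.exp_ofReal_mul_I_im]
    exact sin_pos_of_pos_of_lt_pi (by positivity) (by linarith [pi_pos])
  have hne : ∀ η ∈ Set.Ioo (-π) π, (z η).im ≠ 0 := by
    intro η hη
    rcases eq_or_ne η 0 with rfl | hη0
    · exact him0.ne'
    have hsin : sin η ≠ 0 := by rwa [Ne, sin_eq_zero_iff_of_lt_of_lt hη.1 hη.2]
    refine Complex.im_ne_zero_of_sq_sub_mul_add_one_eq_zero ?_ (hroot η hη)
    rw [mul_comm, Complex.sub_im, Complex.exp_ofReal_mul_I_im]
    simpa using hsin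
  exact isPreconnected_Ioo.forall_lt_of_ne (Complex.continuous_im.comp_continuousOn hcont)
    hmem0 him0 hne
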